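/- Let M ≥ 1, 0 < p < 2M/(2M+1), λ̄ = ln((1−p)/(p/(2M))), γ > 0 fixed, and for i = 1,…,M−1 set γ^{(i)} = √(λ̄/((2(M−i+1)−1)(2(M−i+1)−3))). Then the function ρ(γ) of Theorem 1 is continuous at each γ^{(i)}, i.e., the values obtained with index j = M−i+1 (left limit) and j = M−i (right limit) agree at γ = γ^{(i)}. -/

import Mathlib

/-!
At `γ = √(λ̄ / (a b))` with `a = 2j + 1`, `b = 2j - 1` one has `λ̄ / (2 a γ) = b γ / 2` and
`λ̄ / (2 b γ) = a γ / 2`. Hence the `(1 - p)`-terms of `ρ_{j+1}` and `ρ_j` share the argument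
`(a + b) γ / 2`, while the `p / (2M)`-terms have the arguments `-γ` and `γ`; since `a - b = 2`
and `erf` is odd, the remaining difference `-(p / M) erf γ + (p / (2M)) (erf γ - erf (-γ))`
vanishes.
-/

open Real

noncomputable def erf (z : ℝ) : ℝ :=
  (2 / Real.sqrt Real.pi) * ∫ t in (0:ℝ)..z, Real.exp (-t ^ 2)

theorem erf_neg (x : ℝ) : erf (-x) = -erf x := by
  have h : ∫ t in (0:ℝ)..(-x), exp (-t ^ 2) = -∫ t in (0:ℝ)..x, exp (-t ^ 2) := by
    rw [intervalIntegral.integral_symm, ← neg_zero, ← intervalIntegral.integral_comp_neg]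
    simp only [neg_zero, even_two, Even.neg_pow]
  rw [erf, erf, h, mul_neg]

/-- The branch `ρ_j` of the paper, for real `j`. -/
noncomputable def rhoBranch (M p lamb j γ : ℝ) : ℝ :=
  p / (2 * M) + ((M - j) / M) * p * erf γ
    - (p / (2 * M)) * erf (lamb / (2 * (2 * j - 1) * γ) - (2 * j - 1) * γ / 2)
    + (1 - p) * erf (lamb / (2 * (2 * j - 1) * γ) + (2 * j - 1) * γ / 2)

/-- When `lamb / (a * b) ≤ 0` both sides vanish, through `√· = 0` and division by zero. -/
theorem div_two_mul_mul_sqrt_div (lamb a b : ℝ) (ha : a ≠ 0) :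
    lamb / (2 * a * √(lamb / (a * b))) = b * √(lamb / (a * b)) / 2 := by
  rcases le_or_gt (lamb / (a * b)) 0 with hneg | hpos
  · simp [Real.sqrt_eq_zero'.mpr hneg]
  have hb : b ≠ 0 := by rintro rfl; simp at hpos
  have hγ : √(lamb / (a * b)) ≠ 0 := (Real.sqrt_pos.mpr hpos).ne'
  have hsq : √(lamb / (a * b)) ^ 2 = lamb / (a * b) := Real.sq_sqrt hpos.le
  field_simp
  rw [hsq]
  field_simp

theorem rhoBranch_add_one (M p lamb r : ℝ) (ha : 2 * r + 1 ≠ 0) (hb : 2 * r - 1 ≠ 0) :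
    rhoBranch M p lamb (r + 1) √(lamb / ((2 * r + 1) * (2 * r - 1)))
      = rhoBranch M p lamb r √(lamb / ((2 * r + 1) * (2 * r - 1))) := by
  set γ := √(lamb / ((2 * r + 1) * (2 * r - 1)))
  have hleft : lamb / (2 * (2 * r + 1) * γ) = (2 * r - 1) * γ / 2 :=
    div_two_mul_mul_sqrt_div lamb _ _ ha
  have hright : lamb / (2 * (2 * r - 1) * γ) = (2 * r + 1) * γ / 2 := by
    simpa only [γ, mul_comm (2 * r + 1)] using div_two_mul_mul_sqrt_div lamb _ (2 * r + 1) hb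
  have hj : 2 * (r + 1) - 1 = 2 * r + 1 := by ring
  have hminus_left : (2 * r - 1) * γ / 2 - (2 * r + 1) * γ / 2 = -γ := by ring
  have hminus_right : (2 * r + 1) * γ / 2 - (2 * r - 1) * γ / 2 = γ := by ring
  simp only [rhoBranch, hj, hleft, hright, hminus_left, hminus_right, erf_neg]
  ring_nf

theorem stmt_10_general (M : ℕ) (p : ℝ)
    (lamb : ℝ)
    (ρ : ℕ → ℝ → ℝ)
    (hρ : ∀ (j : ℕ) (γ : ℝ), ρ j γ =
      p / (2 * M) + (((M : ℝ) - (j : ℝ)) / M) * p * erf γ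
        - (p / (2 * M)) * erf (lamb / (2 * (2 * (j : ℝ) - 1) * γ) - (2 * (j : ℝ) - 1) * γ / 2)
        + (1 - p) * erf (lamb / (2 * (2 * (j : ℝ) - 1) * γ) + (2 * (j : ℝ) - 1) * γ / 2))
    (γi : ℕ → ℝ)
    (hγi : ∀ i : ℕ, γi i =
      Real.sqrt (lamb / ((2 * ((M : ℝ) - i + 1) - 1) * (2 * ((M : ℝ) - i + 1) - 3)))) :
    ∀ i : ℕ, 1 ≤ i → i ≤ M - 1 → ρ (M - i + 1) (γi i) = ρ (M - i) (γi i) := by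
  intro i hi hiM
  have hr : ((M - i : ℕ) : ℝ) = M - i := Nat.cast_sub (by omega)
  have hr1 : (1 : ℝ) ≤ ((M - i : ℕ) : ℝ) := by exact_mod_cast (by omega : 1 ≤ M - i)
  have hγ : γi i = √(lamb / ((2 * ((M - i : ℕ) : ℝ) + 1) * (2 * ((M - i : ℕ) : ℝ) - 1))) := by
    rw [hγi, hr]
    ring_nf
  rw [hρ, hρ, hγ, Nat.cast_succ]
  exact rhoBranch_add_one M p lamb _ (by linarith) (by linarith)

theorem stmt_10 (M : ℕ) (hM : 1 ≤ M) (p : ℝ) (hp : 0 < p)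
    (hplt : p < 2 * M / (2 * M + 1))
    (lamb : ℝ) (hlamb : lamb = Real.log ((1 - p) / (p / (2 * M))))
    (ρ : ℕ → ℝ → ℝ)
    (hρ : ∀ (j : ℕ) (γ : ℝ), ρ j γ =
      p / (2 * M) + (((M : ℝ) - (j : ℝ)) / M) * p * erf γ
        - (p / (2 * M)) * erf (lamb / (2 * (2 * (j : ℝ) - 1) * γ) - (2 * (j : ℝ) - 1) * γ / 2)
        + (1 - p) * erf (lamb / (2 * (2 * (j : ℝ) - 1) * γ) + (2 * (j : ℝ) - 1) * γ / 2))
    (γi : ℕ → ℝ)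
    (hγi : ∀ i : ℕ, γi i =
      Real.sqrt (lamb / ((2 * ((M : ℝ) - i + 1) - 1) * (2 * ((M : ℝ) - i + 1) - 3)))) :
    ∀ i : ℕ, 1 ≤ i → i ≤ M - 1 → ρ (M - i + 1) (γi i) = ρ (M - i) (γi i) :=
  stmt_10_general M p lamb ρ hρ γi hγi
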